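/- arXiv:1104.0550 — 2 statements merged into one kernel-verified Lean document; each statement's English description precedes it below -/
import Mathlib

section
/- For a positive rational u = p/q in lowest terms with continued fraction expansion u = [a_0; a_1, ..., a_n] (negative continued fraction with a_0 ≥ 1, a_i > 1 for i ≥ 1), define u^a = [a_0; a_1, ..., a_{n-1}] (with u^a = ∞ interpreted as 1/0 when n = 0) and u^c = [a_0; a_1, ..., a_n - 1], written as fractions p^a/q^a and p^c/q^c. Then u is the mediant of u^a and u^c, i.e., p = p^a + p^c and q = q^a + q^c. -/
/-!
Write the reduced fraction of a rational `v` as the pair `(v.num, v.den)`. When `v > 0`,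
prepending an entry `x` acts on this pair linearly, `(p, q) ↦ (x p - q, p)`, because
`gcd (x p - q, p) = gcd (q, p) = 1`. The entries `a₁, …, aₙ` are at least `2`, so every
proper tail of the expansion is positive, and the pairs of `u`, `uᵃ` and `uᶜ` are the images
under one and the same composite linear map of `(aₙ, 1)`, `(1, 0)` and `(aₙ - 1, 1)`; the first
of these is the sum of the other two.
-/

def ncf : List ℤ → ℚ
  | [] => 0
  | [a] => (a : ℚ)
  | a :: b :: l => (a : ℚ) - 1 / ncf (b :: l)

def numDen (q : ℚ) : ℤ × ℤ := (q.num, q.den)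

theorem Rat.intCast_sub_num (a : ℤ) (q : ℚ) : ((a : ℚ) - q).num = a * q.den - q.num := by
  have h := Rat.mul_den_eq_num ((a : ℚ) - q)
  rw [Rat.intCast_sub_den] at h
  have hq := Rat.mul_den_eq_num q
  have : (((a : ℚ) - q).num : ℚ) = ((a * q.den - q.num : ℤ) : ℚ) := by
    push_cast
    rw [← h, ← hq]
    ring
  exact_mod_cast this

theorem numDen_intCast_sub_one_div (a : ℤ) {v : ℚ} (hv : 0 < v) :
    numDen ((a : ℚ) - 1 / v) = (a * v.num - v.den, v.num) := by
  have hnum : 0 < v.num := Rat.num_pos.mpr hv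
  have hinv_num : (v⁻¹).num = v.den := by
    rw [Rat.num_inv, Int.sign_eq_one_of_pos hnum, one_mul]
  have hinv_den : ((v⁻¹).den : ℤ) = v.num := by
    rw [Rat.den_inv, if_neg hnum.ne', Int.natCast_natAbs, abs_of_pos hnum]
  simp only [numDen, one_div, Rat.intCast_sub_num, Rat.intCast_sub_den, hinv_num, hinv_den]

theorem ncf_cons_of_ne_nil (x : ℤ) {l : List ℤ} (hl : l ≠ []) :
    ncf (x :: l) = x - 1 / ncf l := by
  obtain ⟨y, m, rfl⟩ := List.exists_cons_of_ne_nil hl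
  rfl

theorem List.dropLast_subset_dropLast_cons {α : Type*} (a : α) :
    ∀ l : List α, l.dropLast ⊆ (a :: l).dropLast
  | [] => List.nil_subset _
  | b :: l => by
    rw [List.dropLast_cons_cons]
    exact List.subset_cons_self a _

theorem one_le_ncf : ∀ (l : List ℤ), l ≠ [] → (∀ z ∈ l, 1 ≤ z) →
    (∀ z ∈ l.dropLast, 2 ≤ z) → 1 ≤ ncf l
  | [x], _, h1, _ => by
    show (1 : ℚ) ≤ x
    exact_mod_cast h1 x (by simp)
  | x :: y :: l, _, h1, h2 => by
    have ih : 1 ≤ ncf (y :: l) :=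
      one_le_ncf (y :: l) (by simp) (fun z hz => h1 z (List.mem_cons_of_mem x hz))
        (fun z hz => h2 z (List.dropLast_subset_dropLast_cons x _ hz))
    have hx : (2 : ℚ) ≤ x := by exact_mod_cast h2 x (by simp [List.dropLast_cons_cons])
    have hinv : 1 / ncf (y :: l) ≤ 1 := div_le_one_of_le₀ ih (by linarith)
    rw [ncf_cons_of_ne_nil x (List.cons_ne_nil y l)]
    linarith

/-- `ncfFold l (p, q)` is the pair the recurrence produces for `[l; p/q]`; the seed `(1, 0)`
stands for `∞`, the value of the empty tail. -/
def ncfFold (l : List ℤ) (s : ℤ × ℤ) : ℤ × ℤ :=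
  l.foldr (fun x p => (x * p.1 - p.2, p.1)) s

theorem ncfFold_add (l : List ℤ) (s t : ℤ × ℤ) :
    ncfFold l (s + t) = ncfFold l s + ncfFold l t := by
  induction l with
  | nil => rfl
  | cons x l ih =>
    simp only [ncfFold, List.foldr_cons] at ih ⊢
    rw [ih]
    ext
    · simp only [Prod.fst_add, Prod.snd_add]
      ring
    · rfl

theorem ncfFold_append (l l' : List ℤ) (s : ℤ × ℤ) :
    ncfFold (l ++ l') s = ncfFold l (ncfFold l' s) :=
  List.foldr_append

theorem numDen_ncf_cons (x : ℤ) (m : List ℤ) (h1 : ∀ z ∈ m, 1 ≤ z)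
    (h2 : ∀ z ∈ m.dropLast, 2 ≤ z) : numDen (ncf (x :: m)) = ncfFold (x :: m) (1, 0) := by
  induction m generalizing x with
  | nil => simp [ncf, numDen, ncfFold]
  | cons y m ih =>
    have hpos : 0 < ncf (y :: m) := one_le_ncf (y :: m) (by simp) h1 h2 |>.trans_lt' one_pos
    rw [ncf_cons_of_ne_nil x (List.cons_ne_nil y m), numDen_intCast_sub_one_div x hpos]
    have ih' := ih y (fun z hz => h1 z (List.mem_cons_of_mem y hz))
      (fun z hz => h2 z (List.dropLast_subset_dropLast_cons y m hz))
    simp only [numDen, Prod.ext_iff] at ih'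
    simp only [ncfFold, List.foldr_cons] at ih' ⊢
    rw [ih'.1, ih'.2]

theorem numDen_ncf_append_singleton {l : List ℤ} (hl : l ≠ []) (htail : ∀ z ∈ l.tail, 2 ≤ z)
    {y : ℤ} (hy : 2 ≤ y) :
    numDen (ncf (l ++ [y])) = numDen (ncf l) + numDen (ncf (l ++ [y - 1])) := by
  obtain ⟨x, m, rfl⟩ := List.exists_cons_of_ne_nil hl
  rw [List.tail_cons] at htail
  have hm1 : ∀ z ∈ m, 1 ≤ z := fun z hz => by linarith [htail z hz]
  have happ (w : ℤ) (hw : 1 ≤ w) : numDen (ncf (x :: m ++ [w])) = ncfFold (x :: m) (w, 1) := by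
    have hw1 : ∀ z ∈ m ++ [w], 1 ≤ z := by simpa [or_imp, forall_and] using ⟨hm1, hw⟩
    rw [List.cons_append, numDen_ncf_cons x (m ++ [w]) hw1 (by rwa [List.dropLast_concat]),
      ← List.cons_append, ncfFold_append]
    simp [ncfFold]
  rw [happ y (by linarith), happ (y - 1) (by linarith),
    numDen_ncf_cons x m hm1 (fun z hz => htail z (List.mem_of_mem_dropLast hz)), ← ncfFold_add]
  congr 1
  ext <;> simp

theorem stmt2_general (a : ℕ → ℤ) (n : ℕ)
    (h1 : ∀ i, 1 ≤ i → i ≤ n → 1 < a i) :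
    let u := ncf ((List.range (n + 1)).map a)
    let ua := ncf ((List.range n).map a)
    let uc := ncf ((List.range (n + 1)).map (fun i => if i = n then a i - 1 else a i))
    u.num = (if n = 0 then 1 else ua.num) + uc.num ∧
      (u.den : ℤ) = (if n = 0 then 0 else (ua.den : ℤ)) + (uc.den : ℤ) := by
  intro u ua uc
  cases n with
  | zero =>
    show (ncf [a 0]).num = 1 + (ncf [a 0 - 1]).num ∧
      ((ncf [a 0]).den : ℤ) = 0 + (ncf [a 0 - 1]).den
    simp only [ncf, Rat.num_intCast, Rat.den_intCast]
    omega
  | succ k =>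
    have hu : (List.range (k + 2)).map a = (List.range (k + 1)).map a ++ [a (k + 1)] := by
      rw [List.range_succ, List.map_append, List.map_singleton]
    have huc : (List.range (k + 2)).map (fun i => if i = k + 1 then a i - 1 else a i) =
        (List.range (k + 1)).map a ++ [a (k + 1) - 1] := by
      rw [List.range_succ, List.map_append, List.map_singleton, if_pos rfl]
      congr 1
      exact List.map_congr_left fun i hi => if_neg (List.mem_range.mp hi).ne
    have htail : ∀ z ∈ ((List.range (k + 1)).map a).tail, 2 ≤ z := by
      simp only [← List.map_tail, List.tail_range, List.mem_map, List.mem_range'_1]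
      rintro z ⟨i, hi, rfl⟩
      exact h1 i hi.1 (by omega)
    have key := numDen_ncf_append_singleton (by simp) htail (h1 (k + 1) (by omega) le_rfl)
    rw [← hu, ← huc] at key
    simpa [numDen, Prod.ext_iff] using key

/-- `u = [a₀; …, aₙ]` is the mediant of `uᵃ = [a₀; …, a_{n-1}]`
(interpreted as `1/0` when `n = 0`) and `u^c = [a₀; …, aₙ - 1]`:
the numerators and denominators (of the reduced fractions) add. -/
theorem stmt2 (a : ℕ → ℤ) (n : ℕ) (h0 : 1 ≤ a 0)
    (h1 : ∀ i, 1 ≤ i → i ≤ n → 1 < a i) :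
    let u := ncf ((List.range (n + 1)).map a)
    let ua := ncf ((List.range n).map a)
    let uc := ncf ((List.range (n + 1)).map (fun i => if i = n then a i - 1 else a i))
    u.num = (if n = 0 then 1 else ua.num) + uc.num ∧
      (u.den : ℤ) = (if n = 0 then 0 else (ua.den : ℤ)) + (uc.den : ℤ) :=
  stmt2_general a n h1
end

section
/- Define the homological intersection of two rational slopes p/q and r/s (in lowest terms) on a torus by (p/q)·(r/s) = ps - rq. Fix a positive integer n and set e_k = k/n for positive integers k. If n ≠ 1 and k, k' are distinct integers greater than 1 with gcd(k, n) = gcd(k', n) = 1, then the open intervals J_k = (e_k^c, e_k^a) and J_{k'} = (e_{k'}^c, e_{k'}^a) are disjoint, where e_k^a and e_k^c denote the largest rational greater than e_k and the smallest rational less than e_k having an edge in the Farey tessellation to e_k (i.e., the unique rationals a/b with |kb - na| = 1 adjacent to e_k as in the Farey tessellation). -/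
/-!
If `u` is a Farey neighbour of `x < u` then `u - x = 1 / (x.den * u.den)`. So for `e = k/n` and
`e' = k'/n` with `k < k'`, the right neighbour `u = a/b` of `e` and the left neighbour `v = c/d` of
`e'` satisfy `v - u = (k' - k - 1/b - 1/d) / n`. This is nonnegative when `k' - k ≥ 2`; when
`k' = k + 1`, `b = 1` would force `u = e'`, which is impossible since `e'.den = n ≠ 1`, and
likewise `d ≠ 1`.
-/

/-- Homological intersection of two rational slopes on the torus:
`(p/q)·(r/s) = ps - rq` for reduced fractions. -/
def qdet (x y : ℚ) : ℤ := x.num * (y.den : ℤ) - y.num * (x.den : ℤ)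

lemma den_natCast_div_of_coprime {k n : ℕ} (hn : 0 < n) (h : Nat.Coprime k n) :
    ((k : ℚ) / n).den = n := by
  have := Rat.den_div_eq_of_coprime (a := k) (b := n) (mod_cast hn) (by simpa using h)
  simpa using this

lemma Set.Ioo_disjoint_Ioo_of_le {α : Type*} [Preorder α] {a b c d : α} (h : b ≤ c) :
    Disjoint (Set.Ioo a b) (Set.Ioo c d) :=
  Set.disjoint_left.mpr fun _ hx hx' ↦ (hx.2.trans_le h).not_gt hx'.1

lemma sub_eq_neg_qdet_div (x y : ℚ) : y - x = -qdet x y / (x.den * y.den) := by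
  conv_lhs => rw [← Rat.num_div_den x, ← Rat.num_div_den y]
  rw [qdet]
  push_cast
  field_simp
  ring

lemma sub_eq_one_div_of_qdet_natAbs_eq_one {x y : ℚ} (hxy : x < y) (h : (qdet x y).natAbs = 1) :
    y - x = 1 / (x.den * y.den) := by
  have hneg : qdet x y < 0 := by
    have hpos := sub_pos.mpr hxy
    rw [sub_eq_neg_qdet_div, div_pos_iff_of_pos_right (by positivity), neg_pos] at hpos
    exact_mod_cast hpos
  rw [sub_eq_neg_qdet_div, show qdet x y = -1 by omega]
  simp

lemma sub_eq_div_den_of_den_eq {x y : ℚ} (h : x.den = y.den) :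
    y - x = (y.num - x.num : ℤ) / x.den := by
  conv_lhs => rw [← Rat.num_div_den x, ← Rat.num_div_den y, ← h]
  push_cast
  ring

lemma one_div_den_le_one (q : ℚ) : 1 / (q.den : ℚ) ≤ 1 :=
  div_le_one_of_le₀ (mod_cast q.den_pos) (by positivity)

lemma one_div_den_le_half {q : ℚ} (hq : q.den ≠ 1) : 1 / (q.den : ℚ) ≤ 1 / 2 :=
  one_div_le_one_div_of_le two_pos (mod_cast (by have := q.den_pos; omega : 2 ≤ q.den))

lemma farey_right_le_farey_left {e e' u v : ℚ} (hden : e.den = e'.den) (hden1 : e.den ≠ 1)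
    (he : e < e') (hu : e < u) (hqu : (qdet e u).natAbs = 1)
    (hv : v < e') (hqv : (qdet v e').natAbs = 1) : u ≤ v := by
  set n : ℚ := (e.den : ℚ)
  set m : ℤ := e'.num - e.num
  have hn : (0 : ℚ) < n := by positivity
  have hue : u - e = 1 / (n * u.den) := sub_eq_one_div_of_qdet_natAbs_eq_one hu hqu
  have hev : e' - v = 1 / (v.den * n) := by
    rw [sub_eq_one_div_of_qdet_natAbs_eq_one hv hqv, ← hden]
  have hee : e' - e = m / n := sub_eq_div_den_of_den_eq hden
  have hm : 1 ≤ m := by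
    have hm_pos : (0 : ℚ) < m := (div_pos_iff_of_pos_right hn).mp (hee ▸ sub_pos.mpr he)
    exact_mod_cast hm_pos
  suffices hrecip : 1 / (u.den : ℚ) + 1 / v.den ≤ m by
    have hvu : v - u = (m - (1 / (u.den : ℚ) + 1 / v.den)) / n := by
      rw [show v - u = (e' - e) - (u - e) - (e' - v) by ring, hue, hev, hee]
      field_simp
      ring
    exact sub_nonneg.mp (hvu ▸ div_nonneg (sub_nonneg.mpr hrecip) hn.le)
  obtain hm2 | hm1 : 2 ≤ m ∨ m = 1 := by omega
  · calc 1 / (u.den : ℚ) + 1 / v.den ≤ 1 + 1 :=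
          add_le_add (one_div_den_le_one u) (one_div_den_le_one v)
      _ ≤ m := by exact_mod_cast hm2
  · rw [hm1, Int.cast_one] at hee
    have hu1 : u.den ≠ 1 := fun h ↦ by
      have : u = e' := by
        rw [h, Nat.cast_one, mul_one] at hue
        linarith
      exact hden1 (hden.trans (this ▸ h))
    have hv1 : v.den ≠ 1 := fun h ↦ by
      have : v = e := by
        rw [h, Nat.cast_one, one_mul] at hev
        linarith
      exact hden1 (this ▸ h)
    calc 1 / (u.den : ℚ) + 1 / v.den ≤ 1 / 2 + 1 / 2 :=
          add_le_add (one_div_den_le_half hu1) (one_div_den_le_half hv1)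
      _ = m := by rw [hm1]; norm_num

theorem stmt4_general (n k k' : ℕ) (hn : 0 < n) (hn1 : n ≠ 1)
    (hkk' : k ≠ k')
    (hg : Nat.gcd k n = 1) (hg' : Nat.gcd k' n = 1)
    (ua uc ua' uc' : ℚ)
    (h1 : uc < (k : ℚ) / n) (h2 : (k : ℚ) / n < ua)
    (h3 : (qdet uc ((k : ℚ) / n)).natAbs = 1)
    (h4 : (qdet ((k : ℚ) / n) ua).natAbs = 1)
    (h1' : uc' < (k' : ℚ) / n) (h2' : (k' : ℚ) / n < ua')
    (h3' : (qdet uc' ((k' : ℚ) / n)).natAbs = 1)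
    (h4' : (qdet ((k' : ℚ) / n) ua').natAbs = 1) :
    Disjoint (Set.Ioo uc ua) (Set.Ioo uc' ua') := by
  have hden : ((k : ℚ) / n).den = n := den_natCast_div_of_coprime hn hg
  have hden' : ((k' : ℚ) / n).den = n := den_natCast_div_of_coprime hn hg'
  rcases hkk'.lt_or_gt with hlt | hlt
  · have hle : ua ≤ uc' := farey_right_le_farey_left (hden.trans hden'.symm) (by rwa [hden])
      (by gcongr) h2 h4 h1' h3'
    exact Set.Ioo_disjoint_Ioo_of_le hle
  · have hle : ua' ≤ uc := farey_right_le_farey_left (hden'.trans hden.symm) (by rwa [hden'])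
      (by gcongr) h2' h4' h1 h3
    exact (Set.Ioo_disjoint_Ioo_of_le hle).symm

/-- for `n ≠ 1`, `e_k = k/n`, and `k ≠ k'` both `> 1` and coprime to `n`,
the intervals of influence `J_k = (e_k^c, e_k^a)` and `J_{k'} = (e_{k'}^c, e_{k'}^a)`
are disjoint.  Here `e_k^a` (resp. `e_k^c`) is characterized as the largest rational
above (resp. smallest rational below) `e_k` having a Farey edge to `e_k`. -/
theorem stmt4 (n k k' : ℕ) (hn : 0 < n) (hn1 : n ≠ 1)
    (hk : 1 < k) (hk' : 1 < k') (hkk' : k ≠ k')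
    (hg : Nat.gcd k n = 1) (hg' : Nat.gcd k' n = 1)
    (ua uc ua' uc' : ℚ)
    (h1 : uc < (k : ℚ) / n) (h2 : (k : ℚ) / n < ua)
    (h3 : (qdet uc ((k : ℚ) / n)).natAbs = 1)
    (h4 : (qdet ((k : ℚ) / n) ua).natAbs = 1)
    (h5 : ∀ x : ℚ, (k : ℚ) / n < x → (qdet ((k : ℚ) / n) x).natAbs = 1 → x ≤ ua)
    (h6 : ∀ x : ℚ, x < (k : ℚ) / n → (qdet x ((k : ℚ) / n)).natAbs = 1 → uc ≤ x)
    (h1' : uc' < (k' : ℚ) / n) (h2' : (k' : ℚ) / n < ua')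
    (h3' : (qdet uc' ((k' : ℚ) / n)).natAbs = 1)
    (h4' : (qdet ((k' : ℚ) / n) ua').natAbs = 1)
    (h5' : ∀ x : ℚ, (k' : ℚ) / n < x → (qdet ((k' : ℚ) / n) x).natAbs = 1 → x ≤ ua')
    (h6' : ∀ x : ℚ, x < (k' : ℚ) / n → (qdet x ((k' : ℚ) / n)).natAbs = 1 → uc' ≤ x) :
    Disjoint (Set.Ioo uc ua) (Set.Ioo uc' ua') :=
  stmt4_general n k k' hn hn1 hkk' hg hg' ua uc ua' uc' h1 h2 h3 h4 h1' h2' h3' h4'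
end
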